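/- For an orchard network N on X ⊆ [n] and a pair (i,j) with i ≠ j, j ∈ X, the augmentation ^{(i,j)}N is tree-child if and only if N is tree-child and the state σ_N(i) ∈ {N, T}, i.e., i is either not a leaf of N, or i is a leaf whose parent is a tree node and whose sibling is not a reticulation. -/
import Mathlib


/-- A directed graph with node set `V ⊆ ℕ` and arc set `A`.  Leaves are
identified with their taxon labels (natural numbers). -/
structure Net where
  V : Finset ℕ
  A : Finset (ℕ × ℕ)

namespace Net

def indeg (N : Net) (v : ℕ) : ℕ := (N.A.filter (fun a => a.2 = v)).card
def outdeg (N : Net) (v : ℕ) : ℕ := (N.A.filter (fun a => a.1 = v)).card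

def isLeaf (N : Net) (v : ℕ) : Prop := v ∈ N.V ∧ N.indeg v = 1 ∧ N.outdeg v = 0
def isRoot (N : Net) (v : ℕ) : Prop := v ∈ N.V ∧ N.indeg v = 0 ∧ N.outdeg v = 1
def isTreeNode (N : Net) (v : ℕ) : Prop := v ∈ N.V ∧ N.indeg v = 1 ∧ N.outdeg v = 2
def isRetic (N : Net) (v : ℕ) : Prop := v ∈ N.V ∧ N.indeg v = 2 ∧ N.outdeg v = 1

/-- The set of leaves (= taxa) of a network. -/
def leaves (N : Net) : Finset ℕ := N.V.filter (fun v => N.indeg v = 1 ∧ N.outdeg v = 0)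

/-- Number of reticulation nodes. -/
def numRetic (N : Net) : ℕ := (N.V.filter (fun v => N.indeg v = 2 ∧ N.outdeg v = 1)).card

/-- `N` is a rooted binary phylogenetic network: arcs join nodes, it is acyclic,
has a unique root, and every node is a root, leaf, tree node or reticulation. -/
def isPhylo (N : Net) : Prop :=
  (∀ a ∈ N.A, a.1 ∈ N.V ∧ a.2 ∈ N.V) ∧
  (∀ v, ¬ Relation.TransGen (fun u w => (u, w) ∈ N.A) v v) ∧
  (∃! r, N.isRoot r) ∧
  (∀ v ∈ N.V, N.isRoot v ∨ N.isLeaf v ∨ N.isTreeNode v ∨ N.isRetic v)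

/-- `(i,j)` is a cherry: `i ≠ j` are leaves with a common parent. -/
def isCherry (N : Net) (i j : ℕ) : Prop :=
  i ≠ j ∧ N.isLeaf i ∧ N.isLeaf j ∧ ∃ p, (p, i) ∈ N.A ∧ (p, j) ∈ N.A

/-- `(i,j)` is a reticulated cherry: the parent of `i` is a reticulation,
the parent of `j` is a tree node and a parent of the parent of `i`. -/
def isRetCherry (N : Net) (i j : ℕ) : Prop :=
  i ≠ j ∧ N.isLeaf i ∧ N.isLeaf j ∧
    ∃ pi pj, (pi, i) ∈ N.A ∧ (pj, j) ∈ N.A ∧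
      N.isRetic pi ∧ N.isTreeNode pj ∧ (pj, pi) ∈ N.A

/-- `(i,j)` is a reducible pair. -/
def Reducible (N : Net) (s : ℕ × ℕ) : Prop := N.isCherry s.1 s.2 ∨ N.isRetCherry s.1 s.2

end Net

/-- The reduction of a cherry `(i,j)`: delete leaf `i` and simplify the
(now elementary) common parent `p`, whose parent is `g`. -/
def CherryReduce (N : Net) (i j : ℕ) (N' : Net) : Prop :=
  ∃ p g, (p, i) ∈ N.A ∧ (p, j) ∈ N.A ∧ (g, p) ∈ N.A ∧
    N'.V = (N.V.erase i).erase p ∧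
    N'.A = (N.A \ {(p, i), (p, j), (g, p)}) ∪ {(g, j)}

/-- The reduction of a reticulated cherry `(i,j)`: delete the arc from the parent
`pj` of `j` to the parent `pi` of `i`, and simplify the two elementary nodes. -/
def RetCherryReduce (N : Net) (i j : ℕ) (N' : Net) : Prop :=
  ∃ pi pj q g, (pi, i) ∈ N.A ∧ (pj, j) ∈ N.A ∧ (pj, pi) ∈ N.A ∧
    (q, pi) ∈ N.A ∧ q ≠ pj ∧ (g, pj) ∈ N.A ∧
    N'.V = (N.V.erase pi).erase pj ∧
    N'.A = (N.A \ {(pj, pi), (q, pi), (pi, i), (g, pj), (pj, j)}) ∪ {(q, i), (g, j)}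

/-- `N'` is the reduction `N^{(i,j)}` of the reducible pair `s = (i,j)` in `N`. -/
def Reduces (N : Net) (s : ℕ × ℕ) (N' : Net) : Prop :=
  (N.isCherry s.1 s.2 ∧ CherryReduce N s.1 s.2 N') ∨
  (N.isRetCherry s.1 s.2 ∧ RetCherryReduce N s.1 s.2 N')

/-- `N'` is the result of reducing in `N` the pairs of the sequence `S`, from left to right. -/
inductive ReducesSeq : Net → List (ℕ × ℕ) → Net → Prop
  | nil (N : Net) : ReducesSeq N [] N
  | cons {N M N' : Net} {s : ℕ × ℕ} {S : List (ℕ × ℕ)} :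
      Reduces N s M → ReducesSeq M S N' → ReducesSeq N (s :: S) N'

/-- `N` is the trivial network `I l` (a root and the leaf `l`). -/
def isTrivial (N : Net) (l : ℕ) : Prop :=
  ∃ r, r ≠ l ∧ N.V = {r, l} ∧ N.A = {(r, l)}

/-- `S` is a complete reducible sequence for `N`. -/
def CompleteRS (N : Net) (S : List (ℕ × ℕ)) : Prop :=
  ∃ N' l, ReducesSeq N S N' ∧ isTrivial N' l

/-- `N` is an orchard network. -/
def Net.isOrchard (N : Net) : Prop := N.isPhylo ∧ ∃ S, CompleteRS N S

/-- Isomorphism of networks: an arc-preserving and arc-reflecting bijection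
of the nodes which is the identity on the leaves. -/
def NetIso (N N' : Net) : Prop :=
  ∃ φ : ℕ → ℕ, Set.BijOn φ ↑N.V ↑N'.V ∧
    (∀ u ∈ N.V, ∀ v ∈ N.V, ((u, v) ∈ N.A ↔ (φ u, φ v) ∈ N'.A)) ∧
    ∀ l ∈ N.leaves, φ l = l

/-- Augmentation of `(i,j)` when `i` is a new taxon: create a new leaf `i`,
subdivide the arc `(q,j)` into `j` with a new node `p`, and add the arc `(p,i)`. -/
def CherryAug (N : Net) (i j : ℕ) (N' : Net) : Prop :=
  ∃ q p, (q, j) ∈ N.A ∧ i ∉ N.V ∧ p ∉ N.V ∧ p ≠ i ∧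
    N'.V = insert i (insert p N.V) ∧
    N'.A = (N.A.erase (q, j)) ∪ {(q, p), (p, j), (p, i)}

/-- Augmentation of `(i,j)` when `i` is already a leaf: subdivide the arcs into
`i` and `j` with new nodes `pi`, `pj` and add the arc `(pj, pi)`. -/
def RetAug (N : Net) (i j : ℕ) (N' : Net) : Prop :=
  ∃ qi qj pi pj, (qi, i) ∈ N.A ∧ (qj, j) ∈ N.A ∧
    pi ∉ N.V ∧ pj ∉ N.V ∧ pi ≠ pj ∧
    N'.V = insert pi (insert pj N.V) ∧
    N'.A = ((N.A.erase (qi, i)).erase (qj, j)) ∪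
      {(qi, pi), (pi, i), (qj, pj), (pj, j), (pj, pi)}

/-- `N'` is the augmentation `^{(i,j)}N` of the pair `s = (i,j)` in `N`. -/
def Augments (N : Net) (s : ℕ × ℕ) (N' : Net) : Prop :=
  s.1 ≠ s.2 ∧ N.isLeaf s.2 ∧
    ((s.1 ∉ N.leaves ∧ CherryAug N s.1 s.2 N') ∨
     (s.1 ∈ N.leaves ∧ RetAug N s.1 s.2 N'))

/-- The total order on pairs: `(i,j) ≤ (i',j')` iff `i < i'` or (`i = i'` and `j ≤ j'`). -/
def pairLE (p q : ℕ × ℕ) : Prop := p.1 < q.1 ∨ (p.1 = q.1 ∧ p.2 ≤ q.2)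

/-- Strict version of `pairLE`. -/
def pairLT (p q : ℕ × ℕ) : Prop := p.1 < q.1 ∨ (p.1 = q.1 ∧ p.2 < q.2)

/-- Lexicographic order on sequences of pairs (of the same length). -/
def seqLE : List (ℕ × ℕ) → List (ℕ × ℕ) → Prop
  | [], [] => True
  | p :: S, q :: S' => pairLT p q ∨ (p = q ∧ seqLE S S')
  | _, _ => False

/-- `s` is the minimum reducible pair of `N`. -/
def isMRP (N : Net) (s : ℕ × ℕ) : Prop :=
  N.Reducible s ∧ ∀ t, N.Reducible t → pairLE s t

/-- `S` is the minimum complete reducible sequence of `N`. -/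
def isMCRS (N : Net) (S : List (ℕ × ℕ)) : Prop :=
  CompleteRS N S ∧ ∀ S', CompleteRS N S' → seqLE S S'

/-- `N` is (isomorphic to) the network `^S I` generated by applying the
augmentations of `S`, from right to left, to a trivial network. -/
inductive Generates : List (ℕ × ℕ) → Net → Prop
  | triv {N : Net} {l : ℕ} : isTrivial N l → Generates [] N
  | cons {s : ℕ × ℕ} {S : List (ℕ × ℕ)} {N N' : Net} :
      Generates S N → Augments N s N' → Generates (s :: S) N'

/-- `S` is a minimum augmentation sequence: `S = MCRS(^S I)`. -/
def isMinAugSeq (S : List (ℕ × ℕ)) : Prop :=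
  ∃ N, Generates S N ∧ isMCRS N S

/-- `N` is tree-child: every internal node has a child that is not a reticulation. -/
def Net.isTreeChild (N : Net) : Prop :=
  ∀ v ∈ N.V, ¬ N.isLeaf v → ∃ c, (v, c) ∈ N.A ∧ ¬ N.isRetic c

/-- The possible states of a taxon in a network. -/
inductive LState | sN | sP | sS | sT
deriving DecidableEq

open Classical in
/-- The state `σ_N(i)` of a taxon `i`: `sN` if `i` is not a leaf of `N`; otherwise
`sP` if its parent is a reticulation; otherwise `sS` if its sibling is a
reticulation; otherwise `sT`. -/
noncomputable def state (N : Net) (i : ℕ) : LState :=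
  if ¬ N.isLeaf i then .sN
  else if ∃ p, (p, i) ∈ N.A ∧ N.isRetic p then .sP
  else if ∃ p s, (p, i) ∈ N.A ∧ (p, s) ∈ N.A ∧ s ≠ i ∧ N.isRetic s then .sS
  else .sT

lemma parent_eq {N : Net} {v p p' : ℕ} (h : N.indeg v = 1)
    (h1 : (p, v) ∈ N.A) (h2 : (p', v) ∈ N.A) : p' = p := by
  have hm1 : ((p,v) : ℕ × ℕ) ∈ N.A.filter (fun a => a.2 = v) := Finset.mem_filter.mpr ⟨h1, rfl⟩
  have hm2 : ((p',v) : ℕ × ℕ) ∈ N.A.filter (fun a => a.2 = v) := Finset.mem_filter.mpr ⟨h2, rfl⟩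
  have := Finset.card_le_one.mp h.le _ hm2 _ hm1
  have h := Prod.ext_iff.mp this; exact h.1

lemma child_eq {N : Net} {v c c' : ℕ} (h : N.outdeg v = 1)
    (h1 : (v, c) ∈ N.A) (h2 : (v, c') ∈ N.A) : c' = c := by
  have hm1 : ((v,c) : ℕ × ℕ) ∈ N.A.filter (fun a => a.1 = v) := Finset.mem_filter.mpr ⟨h1, rfl⟩
  have hm2 : ((v,c') : ℕ × ℕ) ∈ N.A.filter (fun a => a.1 = v) := Finset.mem_filter.mpr ⟨h2, rfl⟩
  have := Finset.card_le_one.mp h.le _ hm2 _ hm1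
  have h := Prod.ext_iff.mp this; exact h.2

lemma no_out {N : Net} {v c : ℕ} (h : N.outdeg v = 0) (h1 : (v, c) ∈ N.A) : False := by
  have hm1 : ((v,c) : ℕ × ℕ) ∈ N.A.filter (fun a => a.1 = v) := Finset.mem_filter.mpr ⟨h1, rfl⟩
  rw [Net.outdeg, Finset.card_eq_zero] at h
  simp [h] at hm1

lemma child_mem_pair {N : Net} {v c1 c2 x : ℕ} (h : N.outdeg v = 2) (h12 : c1 ≠ c2)
    (h1 : (v,c1) ∈ N.A) (h2 : (v,c2) ∈ N.A) (hx : (v,x) ∈ N.A) : x = c1 ∨ x = c2 := by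
  have hsub : ({(v,c1),(v,c2)} : Finset (ℕ×ℕ)) ⊆ N.A.filter (fun a => a.1 = v) := by
    intro a ha
    rcases Finset.mem_insert.mp ha with rfl | ha
    · exact Finset.mem_filter.mpr ⟨h1, rfl⟩
    · rw [Finset.mem_singleton.mp ha]; exact Finset.mem_filter.mpr ⟨h2, rfl⟩
  have hcard : (N.A.filter (fun a => a.1 = v)).card ≤ ({(v,c1),(v,c2)} : Finset (ℕ×ℕ)).card := by
    rw [Finset.card_insert_of_notMem (by simp [h12]), Finset.card_singleton]
    exact h.le
  have heq := Finset.eq_of_subset_of_card_le hsub hcard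
  have : ((v,x) : ℕ×ℕ) ∈ ({(v,c1),(v,c2)} : Finset (ℕ×ℕ)) := heq ▸ Finset.mem_filter.mpr ⟨hx, rfl⟩
  rcases Finset.mem_insert.mp this with h' | h'
  · exact Or.inl (Prod.ext_iff.mp h').2
  · exact Or.inr (Prod.ext_iff.mp (Finset.mem_singleton.mp h')).2

lemma exists_root_anc (N : Net) (hP : N.isPhylo) :
    ∀ v ∈ N.V, ∃ u, N.isRoot u ∧
      (u = v ∨ Relation.TransGen (fun a b => (a, b) ∈ N.A) u v) := by
  obtain ⟨harc, hacyc, _, hclass⟩ := hP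
  have hfin : Finite {x // x ∈ N.V} := inferInstance
  have hwf : WellFounded (fun a b : {x // x ∈ N.V} =>
      Relation.TransGen (fun u w : ℕ => (u, w) ∈ N.A) a.1 b.1) := by
    haveI : IsTrans {x // x ∈ N.V}
        (fun a b => Relation.TransGen (fun u w : ℕ => (u, w) ∈ N.A) a.1 b.1) :=
      ⟨fun _ _ _ h1 h2 => h1.trans h2⟩
    haveI : IsIrrefl {x // x ∈ N.V}
        (fun a b => Relation.TransGen (fun u w : ℕ => (u, w) ∈ N.A) a.1 b.1) :=
      ⟨fun a h => hacyc a.1 h⟩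
    exact Finite.wellFounded_of_trans_of_irrefl _
  suffices h : ∀ a : {x // x ∈ N.V}, ∃ u, N.isRoot u ∧
      (u = a.1 ∨ Relation.TransGen (fun a b => (a, b) ∈ N.A) u a.1) by
    intro v hv; exact h ⟨v, hv⟩
  intro a
  induction a using hwf.induction with
  | _ a ih =>
    by_cases h0 : N.indeg a.1 = 0
    · refine ⟨a.1, ?_, Or.inl rfl⟩
      rcases hclass a.1 a.2 with h | h | h | h
      · exact h
      · exact absurd h.2.1 (by omega)
      · exact absurd h.2.1 (by omega)
      · exact absurd h.2.1 (by omega)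
    · have hne : (N.A.filter (fun x => x.2 = a.1)).Nonempty := by
        rw [Finset.nonempty_iff_ne_empty]
        intro he
        exact h0 (by rw [Net.indeg, he, Finset.card_empty])
      obtain ⟨⟨u, w⟩, hm⟩ := hne
      obtain ⟨hmA, hw⟩ := Finset.mem_filter.mp hm
      simp only at hw
      subst hw
      have huV : u ∈ N.V := (harc _ hmA).1
      obtain ⟨r, hr, hor⟩ := ih ⟨u, huV⟩ (Relation.TransGen.single hmA)
      refine ⟨r, hr, Or.inr ?_⟩
      rcases hor with rfl | h'
      · exact Relation.TransGen.single hmA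
      · exact h'.tail hmA

lemma root_child_leaf_absurd (N : Net) (hP : N.isPhylo) {r i j : ℕ} (hr : N.isRoot r)
    (hri : (r, i) ∈ N.A) (hi : N.outdeg i = 0) (hj : j ∈ N.V) (hjr : j ≠ r) (hji : j ≠ i) :
    False := by
  obtain ⟨u, hu, hcase⟩ := exists_root_anc N hP j hj
  obtain ⟨-, -, ⟨r0, hr0, hru⟩, -⟩ := hP
  have hur : u = r := by rw [hru u hu, hru r hr]
  subst hur
  rcases hcase with rfl | htg
  · exact hjr rfl
  · obtain ⟨x, hx, hrest⟩ := (Relation.TransGen.head'_iff).mp htg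
    have hxi : x = i := child_eq hr.2.2 hri hx
    subst hxi
    rcases hrest.cases_head with rfl | ⟨c, hc, -⟩
    · exact hji rfl
    · exact no_out hi hc

set_option maxHeartbeats 2000000

/-- `^{(i,j)}N` is tree-child iff `N` is tree-child and `σ_N(i) ∈ {N, T}`. -/
theorem aug_treeChild_iff (N N' : Net) (i j : ℕ)
    (horch : N.isOrchard) (hij : i ≠ j) (hj : N.isLeaf j)
    (haug : Augments N (i, j) N') :
    (N'.isTreeChild ↔
      (N.isTreeChild ∧ (state N i = LState.sN ∨ state N i = LState.sT))) := by
  have hP := horch.1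
  obtain ⟨harcV, hacyc, hrootu, hclass⟩ := hP
  obtain ⟨-, -, hcases⟩ := haug
  rcases hcases with ⟨hiL, q, p, hqjA, hiV, hpV, hpne, hV', hA'⟩ |
    ⟨hiL, qi, qj, pii, pjj, hqiA, hqjA, hpiV, hpjV, hpipj, hV', hA'⟩
  · -- Cherry augmentation: i is a new taxon
    simp only at hqjA hiV hpV hpne hV' hA'
    have hqV : q ∈ N.V := (harcV _ hqjA).1
    have hjV : j ∈ N.V := (harcV _ hqjA).2
    have hiq : i ≠ q := fun h => hiV (h ▸ hqV)
    have hpq : p ≠ q := fun h => hpV (h ▸ hqV)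
    have hpj : p ≠ j := fun h => hpV (h ▸ hjV)
    have hnleaf : ¬ N.isLeaf i := fun h => hiV h.1
    have hstate : state N i = LState.sN := by rw [state, if_pos hnleaf]
    rw [hstate]
    have hmem : ∀ a : ℕ × ℕ, a ∈ N'.A ↔
        (a ∈ N.A ∧ a ≠ (q, j)) ∨ a = (q, p) ∨ a = (p, j) ∨ a = (p, i) := by
      intro a
      rw [hA']
      simp only [Finset.mem_union, Finset.mem_erase, Finset.mem_insert, Finset.mem_singleton]
      tauto
    have hV'mem : ∀ v, v ∈ N'.V ↔ v = i ∨ v = p ∨ v ∈ N.V := by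
      intro v; rw [hV']; simp
    -- degrees of old nodes are unchanged
    have hdeg : ∀ v ∈ N.V, N'.indeg v = N.indeg v ∧ N'.outdeg v = N.outdeg v := by
      intro v hv
      have hvp : v ≠ p := fun h => hpV (h ▸ hv)
      have hvi : v ≠ i := fun h => hiV (h ▸ hv)
      constructor
      · by_cases hvj : v = j
        · rw [hvj]
          have hf : N'.A.filter (fun a => a.2 = j) = {(p, j)} := by
            ext ⟨a, b⟩
            simp only [Finset.mem_filter, Finset.mem_singleton, hmem, ne_eq, Prod.mk.injEq]
            constructor
            · rintro ⟨h, hb⟩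
              rcases h with ⟨hA, hne⟩ | ⟨h1, h2⟩ | ⟨h1, h2⟩ | ⟨h1, h2⟩
              · rw [hb] at hA
                exact absurd ⟨parent_eq hj.2.1 hqjA hA, hb⟩ hne
              · exact absurd (hb.symm.trans h2) hpj.symm
              · exact ⟨h1, hb⟩
              · exact absurd (h2.symm.trans hb) hij
            · rintro ⟨ha, hb⟩
              exact ⟨Or.inr (Or.inr (Or.inl ⟨ha, hb⟩)), hb⟩
          rw [Net.indeg, hf, Finset.card_singleton, hj.2.1]
        · have hf : N'.A.filter (fun a => a.2 = v) = N.A.filter (fun a => a.2 = v) := by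
            ext ⟨a, b⟩
            simp only [Finset.mem_filter, hmem, ne_eq, Prod.mk.injEq]
            constructor
            · rintro ⟨h, hb⟩
              refine ⟨?_, hb⟩
              rcases h with ⟨hA, -⟩ | ⟨-, h2⟩ | ⟨-, h2⟩ | ⟨-, h2⟩
              · exact hA
              · exact absurd (hb.symm.trans h2) hvp
              · exact absurd (hb.symm.trans h2) hvj
              · exact absurd (hb.symm.trans h2) hvi
            · rintro ⟨hA, hb⟩
              exact ⟨Or.inl ⟨hA, fun h => hvj (hb.symm.trans h.2)⟩, hb⟩
          rw [Net.indeg, hf, Net.indeg]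
      · by_cases hvq : v = q
        · rw [hvq]
          have hf : N'.A.filter (fun a => a.1 = q) =
              insert (q, p) ((N.A.filter (fun a => a.1 = q)).erase (q, j)) := by
            ext ⟨a, b⟩
            simp only [Finset.mem_filter, Finset.mem_insert, Finset.mem_erase, hmem,
              ne_eq, Prod.mk.injEq]
            constructor
            · rintro ⟨h, ha⟩
              rcases h with ⟨hA, hne⟩ | ⟨h1, h2⟩ | ⟨h1, h2⟩ | ⟨h1, h2⟩
              · exact Or.inr ⟨hne, hA, ha⟩
              · exact Or.inl ⟨ha, h2⟩
              · exact absurd (ha.symm.trans h1) hpq.symm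
              · exact absurd (ha.symm.trans h1) hpq.symm
            · rintro (⟨ha, hb⟩ | ⟨hne, hA, ha⟩)
              · exact ⟨Or.inr (Or.inl ⟨ha, hb⟩), ha⟩
              · exact ⟨Or.inl ⟨hA, hne⟩, ha⟩
          have hqp_not : ((q, p) : ℕ × ℕ) ∉ (N.A.filter (fun a => a.1 = q)).erase (q, j) := by
            intro h
            exact hpV ((harcV _ (Finset.mem_filter.mp (Finset.mem_erase.mp h).2).1).2)
          have hqjmem : ((q, j) : ℕ × ℕ) ∈ N.A.filter (fun a => a.1 = q) :=
            Finset.mem_filter.mpr ⟨hqjA, rfl⟩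
          have h1 : 1 ≤ (N.A.filter (fun a => a.1 = q)).card :=
            Finset.card_pos.mpr ⟨_, hqjmem⟩
          rw [Net.outdeg, hf, Finset.card_insert_of_notMem hqp_not,
            Finset.card_erase_of_mem hqjmem, Net.outdeg]
          omega
        · have hf : N'.A.filter (fun a => a.1 = v) = N.A.filter (fun a => a.1 = v) := by
            ext ⟨a, b⟩
            simp only [Finset.mem_filter, hmem, ne_eq, Prod.mk.injEq]
            constructor
            · rintro ⟨h, ha⟩
              refine ⟨?_, ha⟩
              rcases h with ⟨hA, -⟩ | ⟨h1, -⟩ | ⟨h1, -⟩ | ⟨h1, -⟩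
              · exact hA
              · exact absurd (ha.symm.trans h1) hvq
              · exact absurd (ha.symm.trans h1) hvp
              · exact absurd (ha.symm.trans h1) hvp
            · rintro ⟨hA, ha⟩
              exact ⟨Or.inl ⟨hA, fun h => hvq (ha.symm.trans h.1)⟩, ha⟩
          rw [Net.outdeg, hf, Net.outdeg]
    -- new node degrees
    have hpind : N'.indeg p = 1 := by
      have hf : N'.A.filter (fun a => a.2 = p) = {(q, p)} := by
        ext ⟨a, b⟩
        simp only [Finset.mem_filter, Finset.mem_singleton, hmem, ne_eq, Prod.mk.injEq]
        constructor
        · rintro ⟨h, hb⟩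
          rcases h with ⟨hA, -⟩ | ⟨h1, h2⟩ | ⟨h1, h2⟩ | ⟨h1, h2⟩
          · rw [hb] at hA
            exact absurd ((harcV _ hA).2) hpV
          · exact ⟨h1, hb⟩
          · exact absurd (h2.symm.trans hb) hpj.symm
          · exact absurd (h2.symm.trans hb) (fun h => hpne h.symm)
        · rintro ⟨ha, hb⟩
          exact ⟨Or.inr (Or.inl ⟨ha, hb⟩), hb⟩
      rw [Net.indeg, hf, Finset.card_singleton]
    have hpoutd : N'.outdeg p = 2 := by
      have hf : N'.A.filter (fun a => a.1 = p) = {(p, j), (p, i)} := by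
        ext ⟨a, b⟩
        simp only [Finset.mem_filter, Finset.mem_insert, Finset.mem_singleton, hmem,
          ne_eq, Prod.mk.injEq]
        constructor
        · rintro ⟨h, ha⟩
          rcases h with ⟨hA, -⟩ | ⟨h1, h2⟩ | ⟨h1, h2⟩ | ⟨h1, h2⟩
          · rw [ha] at hA
            exact absurd ((harcV _ hA).1) hpV
          · exact absurd (ha.symm.trans h1) hpq
          · exact Or.inl ⟨ha, h2⟩
          · exact Or.inr ⟨ha, h2⟩
        · rintro (⟨ha, hb⟩ | ⟨ha, hb⟩)
          · exact ⟨Or.inr (Or.inr (Or.inl ⟨ha, hb⟩)), ha⟩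
          · exact ⟨Or.inr (Or.inr (Or.inr ⟨ha, hb⟩)), ha⟩
      rw [Net.outdeg, hf]
      rw [Finset.card_insert_of_notMem (by simp [Ne.symm hij]), Finset.card_singleton]
    have hiind : N'.indeg i = 1 := by
      have hf : N'.A.filter (fun a => a.2 = i) = {(p, i)} := by
        ext ⟨a, b⟩
        simp only [Finset.mem_filter, Finset.mem_singleton, hmem, ne_eq, Prod.mk.injEq]
        constructor
        · rintro ⟨h, hb⟩
          rcases h with ⟨hA, -⟩ | ⟨h1, h2⟩ | ⟨h1, h2⟩ | ⟨h1, h2⟩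
          · rw [hb] at hA
            exact absurd ((harcV _ hA).2) hiV
          · exact absurd (h2.symm.trans hb) (fun h => hpne h)
          · exact absurd (h2.symm.trans hb) (fun h => hij h.symm)
          · exact ⟨h1, hb⟩
        · rintro ⟨ha, hb⟩
          exact ⟨Or.inr (Or.inr (Or.inr ⟨ha, hb⟩)), hb⟩
      rw [Net.indeg, hf, Finset.card_singleton]
    have hioutd : N'.outdeg i = 0 := by
      have hf : N'.A.filter (fun a => a.1 = i) = ∅ := by
        ext ⟨a, b⟩
        simp only [Finset.mem_filter, Finset.notMem_empty, iff_false, not_and, hmem,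
          ne_eq, Prod.mk.injEq]
        rintro (⟨hA, -⟩ | ⟨h1, -⟩ | ⟨h1, -⟩ | ⟨h1, -⟩) ha
        · rw [ha] at hA
          exact hiV ((harcV _ hA).1)
        · exact hiq (ha.symm.trans h1)
        · exact hpne (h1.symm.trans ha)
        · exact hpne (h1.symm.trans ha)
      rw [Net.outdeg, hf, Finset.card_empty]
    have hleaf_iff : ∀ v ∈ N.V, (N'.isLeaf v ↔ N.isLeaf v) := by
      intro v hv
      obtain ⟨h1, h2⟩ := hdeg v hv
      rw [Net.isLeaf, Net.isLeaf, h1, h2]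
      simp [hv, (hV'mem v).mpr (Or.inr (Or.inr hv))]
    have hret_iff : ∀ v ∈ N.V, (N'.isRetic v ↔ N.isRetic v) := by
      intro v hv
      obtain ⟨h1, h2⟩ := hdeg v hv
      rw [Net.isRetic, Net.isRetic, h1, h2]
      simp [hv, (hV'mem v).mpr (Or.inr (Or.inr hv))]
    constructor
    · intro hTC'
      refine ⟨?_, Or.inl rfl⟩
      intro v hv hnl
      have hv' : v ∈ N'.V := (hV'mem v).mpr (Or.inr (Or.inr hv))
      have hnl' : ¬ N'.isLeaf v := fun h => hnl ((hleaf_iff v hv).mp h)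
      obtain ⟨c, hc, hcr⟩ := hTC' v hv' hnl'
      rcases (hmem (v, c)).mp hc with ⟨hA, -⟩ | hcase | hcase | hcase
      · exact ⟨c, hA, fun hr => hcr ((hret_iff c (harcV _ hA).2).mpr hr)⟩
      · simp only [Prod.mk.injEq] at hcase
        refine ⟨j, ?_, fun hr => ?_⟩
        · rw [hcase.1]; exact hqjA
        · have := hr.2.2
          have := hj.2.2
          omega
      · simp only [Prod.mk.injEq] at hcase
        rw [hcase.1] at hv
        exact absurd hv hpV
      · simp only [Prod.mk.injEq] at hcase
        rw [hcase.1] at hv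
        exact absurd hv hpV
    · rintro ⟨hTC, -⟩
      intro v hv' hnl'
      rcases (hV'mem v).mp hv' with hcv | hcv | hv
      · rw [hcv] at hnl' hv'
        exact absurd ⟨hv', hiind, hioutd⟩ hnl'
      · rw [hcv]
        refine ⟨j, (hmem (p, j)).mpr (Or.inr (Or.inr (Or.inl rfl))), fun hr => ?_⟩
        have h1 := hr.2.2
        have h2 := (hdeg j hjV).2
        have h3 := hj.2.2
        omega
      · have hnl : ¬ N.isLeaf v := fun h => hnl' ((hleaf_iff v hv).mpr h)
        obtain ⟨c, hc, hcr⟩ := hTC v hv hnl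
        by_cases hcq : (v, c) = (q, j)
        · simp only [Prod.mk.injEq] at hcq
          refine ⟨p, (hmem (v, p)).mpr (Or.inr (Or.inl (by rw [hcq.1]))), fun hr => ?_⟩
          have := hr.2.2
          omega
        · refine ⟨c, (hmem (v, c)).mpr (Or.inl ⟨hc, hcq⟩), fun hr => ?_⟩
          exact hcr ((hret_iff c (harcV _ hc).2).mp hr)
  · -- Reticulated cherry augmentation: i is an existing leaf
    simp only at hiL hqiA hqjA hpiV hpjV hpipj hV' hA'
    have hleafi : N.isLeaf i := by
      have h := Finset.mem_filter.mp hiL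
      exact ⟨h.1, h.2.1, h.2.2⟩
    have hP : N.isPhylo := ⟨harcV, hacyc, hrootu, hclass⟩
    have hqiV : qi ∈ N.V := (harcV _ hqiA).1
    have hiV : i ∈ N.V := (harcV _ hqiA).2
    have hqjV : qj ∈ N.V := (harcV _ hqjA).1
    have hjV : j ∈ N.V := (harcV _ hqjA).2
    have hpii_qi : pii ≠ qi := fun h => hpiV (h ▸ hqiV)
    have hpii_qj : pii ≠ qj := fun h => hpiV (h ▸ hqjV)
    have hpii_i : pii ≠ i := fun h => hpiV (h ▸ hiV)
    have hpii_j : pii ≠ j := fun h => hpiV (h ▸ hjV)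
    have hpjj_qi : pjj ≠ qi := fun h => hpjV (h ▸ hqiV)
    have hpjj_qj : pjj ≠ qj := fun h => hpjV (h ▸ hqjV)
    have hpjj_i : pjj ≠ i := fun h => hpjV (h ▸ hiV)
    have hpjj_j : pjj ≠ j := fun h => hpjV (h ▸ hjV)
    have hqii : qi ≠ i := fun h => no_out hleafi.2.2 (h ▸ hqiA)
    have hqjj : qj ≠ j := fun h => no_out hj.2.2 (h ▸ hqjA)
    have hqji : qj ≠ i := fun h => no_out hleafi.2.2 (h ▸ hqjA)
    have hqij : qi ≠ j := fun h => no_out hj.2.2 (h ▸ hqiA)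
    have hmem : ∀ a : ℕ × ℕ, a ∈ N'.A ↔
        (a ∈ N.A ∧ a ≠ (qi, i) ∧ a ≠ (qj, j)) ∨ a = (qi, pii) ∨ a = (pii, i) ∨
          a = (qj, pjj) ∨ a = (pjj, j) ∨ a = (pjj, pii) := by
      intro a
      rw [hA']
      simp only [Finset.mem_union, Finset.mem_erase, Finset.mem_insert, Finset.mem_singleton]
      constructor
      · rintro (⟨h2, h1, hA⟩ | h)
        · exact Or.inl ⟨hA, h1, h2⟩
        · exact Or.inr h
      · rintro (⟨hA, h1, h2⟩ | h)
        · exact Or.inl ⟨h2, h1, hA⟩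
        · exact Or.inr h
    have hV'mem : ∀ v, v ∈ N'.V ↔ v = pii ∨ v = pjj ∨ v ∈ N.V := by
      intro v; rw [hV']; simp
    -- degrees of old nodes are unchanged
    have hdeg : ∀ v ∈ N.V, N'.indeg v = N.indeg v ∧ N'.outdeg v = N.outdeg v := by
      intro v hv
      have hvpi : v ≠ pii := fun h => hpiV (h ▸ hv)
      have hvpj : v ≠ pjj := fun h => hpjV (h ▸ hv)
      constructor
      · by_cases hvi : v = i
        · rw [hvi]
          have hf : N'.A.filter (fun a => a.2 = i) = {(pii, i)} := by
            ext ⟨a, b⟩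
            simp only [Finset.mem_filter, Finset.mem_singleton, hmem, ne_eq, Prod.mk.injEq]
            constructor
            · rintro ⟨h, hb⟩
              rcases h with ⟨hA, hne1, hne2⟩ | ⟨h1, h2⟩ | ⟨h1, h2⟩ | ⟨h1, h2⟩ | ⟨h1, h2⟩ | ⟨h1, h2⟩
              · rw [hb] at hA
                have := parent_eq hleafi.2.1 hqiA hA
                exfalso; omega
              all_goals omega
            · rintro ⟨ha, hb⟩
              exact ⟨Or.inr (Or.inr (Or.inl ⟨ha, hb⟩)), hb⟩
          rw [Net.indeg, hf, Finset.card_singleton, hleafi.2.1]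
        · by_cases hvj : v = j
          · rw [hvj]
            have hf : N'.A.filter (fun a => a.2 = j) = {(pjj, j)} := by
              ext ⟨a, b⟩
              simp only [Finset.mem_filter, Finset.mem_singleton, hmem, ne_eq, Prod.mk.injEq]
              constructor
              · rintro ⟨h, hb⟩
                rcases h with ⟨hA, hne1, hne2⟩ | ⟨h1, h2⟩ | ⟨h1, h2⟩ | ⟨h1, h2⟩ | ⟨h1, h2⟩ | ⟨h1, h2⟩
                · rw [hb] at hA
                  have := parent_eq hj.2.1 hqjA hA
                  exfalso; omega
                all_goals omega
              · rintro ⟨ha, hb⟩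
                exact ⟨Or.inr (Or.inr (Or.inr (Or.inr (Or.inl ⟨ha, hb⟩)))), hb⟩
            rw [Net.indeg, hf, Finset.card_singleton, hj.2.1]
          · have hf : N'.A.filter (fun a => a.2 = v) = N.A.filter (fun a => a.2 = v) := by
              ext ⟨a, b⟩
              simp only [Finset.mem_filter, hmem, ne_eq, Prod.mk.injEq]
              constructor
              · rintro ⟨h, hb⟩
                refine ⟨?_, hb⟩
                rcases h with ⟨hA, -, -⟩ | ⟨h1, h2⟩ | ⟨h1, h2⟩ | ⟨h1, h2⟩ | ⟨h1, h2⟩ | ⟨h1, h2⟩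
                · exact hA
                all_goals (exfalso; omega)
              · rintro ⟨hA, hb⟩
                refine ⟨Or.inl ⟨hA, ?_, ?_⟩, hb⟩ <;> (intro h; omega)
            rw [Net.indeg, hf, Net.indeg]
      · by_cases hvqi : v = qi
        · by_cases hvqj : v = qj
          · -- v = qi = qj
            rw [hvqi]
            have hqq : qj = qi := hvqj.symm.trans hvqi
            rw [hqq] at hmem hqjA
            have hf : N'.A.filter (fun a => a.1 = qi) =
                insert (qi, pii) (insert (qi, pjj)
                  (((N.A.filter (fun a => a.1 = qi)).erase (qi, i)).erase (qi, j))) := by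
              ext ⟨a, b⟩
              simp only [Finset.mem_filter, Finset.mem_insert, Finset.mem_erase, hmem,
                ne_eq, Prod.mk.injEq]
              constructor
              · rintro ⟨h, ha⟩
                rcases h with ⟨hA, hne1, hne2⟩ | ⟨h1, h2⟩ | ⟨h1, h2⟩ | ⟨h1, h2⟩ | ⟨h1, h2⟩ | ⟨h1, h2⟩
                · exact Or.inr (Or.inr ⟨hne2, hne1, hA, ha⟩)
                · exact Or.inl ⟨h1, h2⟩
                · exfalso; omega
                · exact Or.inr (Or.inl ⟨h1, h2⟩)
                · exfalso; omega
                · exfalso; omega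
              · rintro (⟨ha, hb⟩ | ⟨ha, hb⟩ | ⟨hne2, hne1, hA, ha⟩)
                · exact ⟨Or.inr (Or.inl ⟨ha, hb⟩), ha⟩
                · exact ⟨Or.inr (Or.inr (Or.inr (Or.inl ⟨ha, hb⟩))), ha⟩
                · exact ⟨Or.inl ⟨hA, hne1, hne2⟩, ha⟩
            have m1 : ((qi, i) : ℕ × ℕ) ∈ N.A.filter (fun a => a.1 = qi) :=
              Finset.mem_filter.mpr ⟨hqiA, rfl⟩
            have m2 : ((qi, j) : ℕ × ℕ) ∈ N.A.filter (fun a => a.1 = qi) :=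
              Finset.mem_filter.mpr ⟨hqjA, rfl⟩
            have hcard2 : 1 < (N.A.filter (fun a => a.1 = qi)).card :=
              Finset.one_lt_card.mpr ⟨_, m1, _, m2, by simp [hij]⟩
            have m2' : ((qi, j) : ℕ × ℕ) ∈ (N.A.filter (fun a => a.1 = qi)).erase (qi, i) :=
              Finset.mem_erase.mpr ⟨by simp [Ne.symm hij], m2⟩
            have nm1 : ((qi, pjj) : ℕ × ℕ) ∉
                ((N.A.filter (fun a => a.1 = qi)).erase (qi, i)).erase (qi, j) := by
              intro h
              exact hpjV ((harcV _ (Finset.mem_filter.mp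
                (Finset.mem_erase.mp (Finset.mem_erase.mp h).2).2).1).2)
            have nm2 : ((qi, pii) : ℕ × ℕ) ∉ insert (qi, pjj)
                (((N.A.filter (fun a => a.1 = qi)).erase (qi, i)).erase (qi, j)) := by
              intro h
              rcases Finset.mem_insert.mp h with h | h
              · exact hpipj (by simpa using h)
              · exact hpiV ((harcV _ (Finset.mem_filter.mp
                  (Finset.mem_erase.mp (Finset.mem_erase.mp h).2).2).1).2)
            rw [Net.outdeg, hf, Finset.card_insert_of_notMem nm2,
              Finset.card_insert_of_notMem nm1, Finset.card_erase_of_mem m2',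
              Finset.card_erase_of_mem m1, Net.outdeg]
            omega
          · -- v = qi ≠ qj
            rw [hvqi]
            have hqiqj : qi ≠ qj := fun h => hvqj (hvqi.trans h)
            have hf : N'.A.filter (fun a => a.1 = qi) =
                insert (qi, pii) ((N.A.filter (fun a => a.1 = qi)).erase (qi, i)) := by
              ext ⟨a, b⟩
              simp only [Finset.mem_filter, Finset.mem_insert, Finset.mem_erase, hmem,
                ne_eq, Prod.mk.injEq]
              constructor
              · rintro ⟨h, ha⟩
                rcases h with ⟨hA, hne1, hne2⟩ | ⟨h1, h2⟩ | ⟨h1, h2⟩ | ⟨h1, h2⟩ | ⟨h1, h2⟩ | ⟨h1, h2⟩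
                · exact Or.inr ⟨hne1, hA, ha⟩
                · exact Or.inl ⟨h1, h2⟩
                all_goals (exfalso; omega)
              · rintro (⟨ha, hb⟩ | ⟨hne, hA, ha⟩)
                · exact ⟨Or.inr (Or.inl ⟨ha, hb⟩), ha⟩
                · refine ⟨Or.inl ⟨hA, hne, ?_⟩, ha⟩
                  intro h; omega
            have m1 : ((qi, i) : ℕ × ℕ) ∈ N.A.filter (fun a => a.1 = qi) :=
              Finset.mem_filter.mpr ⟨hqiA, rfl⟩
            have hcard1 : 1 ≤ (N.A.filter (fun a => a.1 = qi)).card :=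
              Finset.card_pos.mpr ⟨_, m1⟩
            have nm1 : ((qi, pii) : ℕ × ℕ) ∉ (N.A.filter (fun a => a.1 = qi)).erase (qi, i) := by
              intro h
              exact hpiV ((harcV _ (Finset.mem_filter.mp (Finset.mem_erase.mp h).2).1).2)
            rw [Net.outdeg, hf, Finset.card_insert_of_notMem nm1,
              Finset.card_erase_of_mem m1, Net.outdeg]
            omega
        · by_cases hvqj : v = qj
          · -- v = qj ≠ qi
            rw [hvqj]
            have hqjqi : qj ≠ qi := fun h => hvqi (hvqj.trans h)
            have hf : N'.A.filter (fun a => a.1 = qj) =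
                insert (qj, pjj) ((N.A.filter (fun a => a.1 = qj)).erase (qj, j)) := by
              ext ⟨a, b⟩
              simp only [Finset.mem_filter, Finset.mem_insert, Finset.mem_erase, hmem,
                ne_eq, Prod.mk.injEq]
              constructor
              · rintro ⟨h, ha⟩
                rcases h with ⟨hA, hne1, hne2⟩ | ⟨h1, h2⟩ | ⟨h1, h2⟩ | ⟨h1, h2⟩ | ⟨h1, h2⟩ | ⟨h1, h2⟩
                · exact Or.inr ⟨hne2, hA, ha⟩
                · exfalso; omega
                · exfalso; omega
                · exact Or.inl ⟨h1, h2⟩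
                all_goals (exfalso; omega)
              · rintro (⟨ha, hb⟩ | ⟨hne, hA, ha⟩)
                · exact ⟨Or.inr (Or.inr (Or.inr (Or.inl ⟨ha, hb⟩))), ha⟩
                · refine ⟨Or.inl ⟨hA, ?_, hne⟩, ha⟩
                  intro h; omega
            have m1 : ((qj, j) : ℕ × ℕ) ∈ N.A.filter (fun a => a.1 = qj) :=
              Finset.mem_filter.mpr ⟨hqjA, rfl⟩
            have hcard1 : 1 ≤ (N.A.filter (fun a => a.1 = qj)).card :=
              Finset.card_pos.mpr ⟨_, m1⟩
            have nm1 : ((qj, pjj) : ℕ × ℕ) ∉ (N.A.filter (fun a => a.1 = qj)).erase (qj, j) := by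
              intro h
              exact hpjV ((harcV _ (Finset.mem_filter.mp (Finset.mem_erase.mp h).2).1).2)
            rw [Net.outdeg, hf, Finset.card_insert_of_notMem nm1,
              Finset.card_erase_of_mem m1, Net.outdeg]
            omega
          · have hf : N'.A.filter (fun a => a.1 = v) = N.A.filter (fun a => a.1 = v) := by
              ext ⟨a, b⟩
              simp only [Finset.mem_filter, hmem, ne_eq, Prod.mk.injEq]
              constructor
              · rintro ⟨h, ha⟩
                refine ⟨?_, ha⟩
                rcases h with ⟨hA, -, -⟩ | ⟨h1, h2⟩ | ⟨h1, h2⟩ | ⟨h1, h2⟩ | ⟨h1, h2⟩ | ⟨h1, h2⟩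
                · exact hA
                all_goals (exfalso; omega)
              · rintro ⟨hA, ha⟩
                refine ⟨Or.inl ⟨hA, ?_, ?_⟩, ha⟩ <;> (intro h; omega)
            rw [Net.outdeg, hf, Net.outdeg]
    -- degrees of new nodes
    have hpiind : N'.indeg pii = 2 := by
      have hf : N'.A.filter (fun a => a.2 = pii) = {(qi, pii), (pjj, pii)} := by
        ext ⟨a, b⟩
        simp only [Finset.mem_filter, Finset.mem_insert, Finset.mem_singleton, hmem, ne_eq,
          Prod.mk.injEq]
        constructor
        · rintro ⟨h, hb⟩
          rcases h with ⟨hA, -, -⟩ | ⟨h1, h2⟩ | ⟨h1, h2⟩ | ⟨h1, h2⟩ | ⟨h1, h2⟩ | ⟨h1, h2⟩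
          · rw [hb] at hA
            exact absurd ((harcV _ hA).2) hpiV
          all_goals omega
        · rintro (⟨ha, hb⟩ | ⟨ha, hb⟩)
          · exact ⟨Or.inr (Or.inl ⟨ha, hb⟩), hb⟩
          · exact ⟨Or.inr (Or.inr (Or.inr (Or.inr (Or.inr ⟨ha, hb⟩)))), hb⟩
      rw [Net.indeg, hf]
      rw [Finset.card_insert_of_notMem (by simp [hpjj_qi.symm]), Finset.card_singleton]
    have hpioutd : N'.outdeg pii = 1 := by
      have hf : N'.A.filter (fun a => a.1 = pii) = {(pii, i)} := by
        ext ⟨a, b⟩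
        simp only [Finset.mem_filter, Finset.mem_singleton, hmem, ne_eq, Prod.mk.injEq]
        constructor
        · rintro ⟨h, ha⟩
          rcases h with ⟨hA, -, -⟩ | ⟨h1, h2⟩ | ⟨h1, h2⟩ | ⟨h1, h2⟩ | ⟨h1, h2⟩ | ⟨h1, h2⟩
          · rw [ha] at hA
            exact absurd ((harcV _ hA).1) hpiV
          all_goals omega
        · rintro ⟨ha, hb⟩
          exact ⟨Or.inr (Or.inr (Or.inl ⟨ha, hb⟩)), ha⟩
      rw [Net.outdeg, hf, Finset.card_singleton]
    have hpjind : N'.indeg pjj = 1 := by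
      have hf : N'.A.filter (fun a => a.2 = pjj) = {(qj, pjj)} := by
        ext ⟨a, b⟩
        simp only [Finset.mem_filter, Finset.mem_singleton, hmem, ne_eq, Prod.mk.injEq]
        constructor
        · rintro ⟨h, hb⟩
          rcases h with ⟨hA, -, -⟩ | ⟨h1, h2⟩ | ⟨h1, h2⟩ | ⟨h1, h2⟩ | ⟨h1, h2⟩ | ⟨h1, h2⟩
          · rw [hb] at hA
            exact absurd ((harcV _ hA).2) hpjV
          all_goals omega
        · rintro ⟨ha, hb⟩
          exact ⟨Or.inr (Or.inr (Or.inr (Or.inl ⟨ha, hb⟩))), hb⟩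
      rw [Net.indeg, hf, Finset.card_singleton]
    have hpjoutd : N'.outdeg pjj = 2 := by
      have hf : N'.A.filter (fun a => a.1 = pjj) = {(pjj, j), (pjj, pii)} := by
        ext ⟨a, b⟩
        simp only [Finset.mem_filter, Finset.mem_insert, Finset.mem_singleton, hmem, ne_eq,
          Prod.mk.injEq]
        constructor
        · rintro ⟨h, ha⟩
          rcases h with ⟨hA, -, -⟩ | ⟨h1, h2⟩ | ⟨h1, h2⟩ | ⟨h1, h2⟩ | ⟨h1, h2⟩ | ⟨h1, h2⟩
          · rw [ha] at hA
            exact absurd ((harcV _ hA).1) hpjV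
          all_goals omega
        · rintro (⟨ha, hb⟩ | ⟨ha, hb⟩)
          · exact ⟨Or.inr (Or.inr (Or.inr (Or.inr (Or.inl ⟨ha, hb⟩)))), ha⟩
          · exact ⟨Or.inr (Or.inr (Or.inr (Or.inr (Or.inr ⟨ha, hb⟩)))), ha⟩
      rw [Net.outdeg, hf]
      rw [Finset.card_insert_of_notMem (by simp [hpii_j.symm]), Finset.card_singleton]
    have hleaf_iff : ∀ v ∈ N.V, (N'.isLeaf v ↔ N.isLeaf v) := by
      intro v hv
      obtain ⟨h1, h2⟩ := hdeg v hv
      rw [Net.isLeaf, Net.isLeaf, h1, h2]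
      simp [hv, (hV'mem v).mpr (Or.inr (Or.inr hv))]
    have hret_iff : ∀ v ∈ N.V, (N'.isRetic v ↔ N.isRetic v) := by
      intro v hv
      obtain ⟨h1, h2⟩ := hdeg v hv
      rw [Net.isRetic, Net.isRetic, h1, h2]
      simp [hv, (hV'mem v).mpr (Or.inr (Or.inr hv))]
    have hpiiret : N'.isRetic pii := ⟨(hV'mem pii).mpr (Or.inl rfl), hpiind, hpioutd⟩
    -- characterisation of the state of i
    have hnn : ¬¬ N.isLeaf i := not_not_intro hleafi
    have hstiff : (state N i = LState.sN ∨ state N i = LState.sT) ↔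
        (¬ N.isRetic qi ∧ ∀ s, (qi, s) ∈ N.A → s ≠ i → ¬ N.isRetic s) := by
      simp only [state, if_neg hnn]
      by_cases hp : ∃ p, (p, i) ∈ N.A ∧ N.isRetic p
      · rw [if_pos hp]
        obtain ⟨p, hpA, hpr⟩ := hp
        have hpq : p = qi := parent_eq hleafi.2.1 hqiA hpA
        rw [hpq] at hpr
        constructor
        · rintro (h | h) <;> exact absurd h (by decide)
        · rintro ⟨hq, -⟩
          exact absurd hpr hq
      · rw [if_neg hp]
        by_cases hs : ∃ p s, (p, i) ∈ N.A ∧ (p, s) ∈ N.A ∧ s ≠ i ∧ N.isRetic s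
        · rw [if_pos hs]
          obtain ⟨p, s, hpA, hsA, hsi, hsr⟩ := hs
          have hpq : p = qi := parent_eq hleafi.2.1 hqiA hpA
          rw [hpq] at hsA
          constructor
          · rintro (h | h) <;> exact absurd h (by decide)
          · rintro ⟨-, hall⟩
            exact absurd hsr (hall s hsA hsi)
        · rw [if_neg hs]
          constructor
          · intro _
            exact ⟨fun hqr => hp ⟨qi, hqiA, hqr⟩,
              fun s hsA hsi hsr => hs ⟨qi, s, hqiA, hsA, hsi, hsr⟩⟩
          · intro _
            exact Or.inr rfl
    rw [hstiff]
    constructor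
    · intro hTC'
      have hretqi : ¬ N.isRetic qi := by
        intro hqr
        have hqiqj : qi ≠ qj := by
          intro h
          have hji := child_eq hqr.2.2 hqiA (h.symm ▸ hqjA)
          exact hij hji.symm
        have hqv' : qi ∈ N'.V := (hV'mem qi).mpr (Or.inr (Or.inr hqiV))
        have hnl' : ¬ N'.isLeaf qi := by
          intro h
          have h2 := (hdeg qi hqiV).2
          have h3 := hqr.2.2
          have h4 := h.2.2
          omega
        obtain ⟨c, hc, hcr⟩ := hTC' qi hqv' hnl'
        rcases (hmem (qi, c)).mp hc with ⟨hA, hne1, -⟩ | h | h | h | h | h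
        · have hci := child_eq hqr.2.2 hqiA hA
          exact hne1 (by rw [hci])
        · simp only [Prod.mk.injEq] at h
          rw [h.2] at hcr
          exact hcr hpiiret
        · simp only [Prod.mk.injEq] at h
          exact hpii_qi h.1.symm
        · simp only [Prod.mk.injEq] at h
          exact hqiqj h.1
        · simp only [Prod.mk.injEq] at h
          exact hpjj_qi h.1.symm
        · simp only [Prod.mk.injEq] at h
          exact hpjj_qi h.1.symm
      refine ⟨?_, hretqi, ?_⟩
      · intro v hv hnl
        have hv' : v ∈ N'.V := (hV'mem v).mpr (Or.inr (Or.inr hv))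
        have hnl' : ¬ N'.isLeaf v := fun h => hnl ((hleaf_iff v hv).mp h)
        obtain ⟨c, hc, hcr⟩ := hTC' v hv' hnl'
        rcases (hmem (v, c)).mp hc with ⟨hA, -, -⟩ | h | h | h | h | h
        · exact ⟨c, hA, fun hr => hcr ((hret_iff c (harcV _ hA).2).mpr hr)⟩
        · simp only [Prod.mk.injEq] at h
          rw [h.2] at hcr
          exact absurd hpiiret hcr
        · simp only [Prod.mk.injEq] at h
          rw [h.1] at hv
          exact absurd hv hpiV
        · simp only [Prod.mk.injEq] at h
          refine ⟨j, by rw [h.1]; exact hqjA, fun hr => ?_⟩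
          have h5 := hr.2.2
          have h6 := hj.2.2
          omega
        · simp only [Prod.mk.injEq] at h
          rw [h.1] at hv
          exact absurd hv hpjV
        · simp only [Prod.mk.injEq] at h
          rw [h.1] at hv
          exact absurd hv hpjV
      · intro s hsA hsi hsr
        have hsV : s ∈ N.V := (harcV _ hsA).2
        have hqout2 : N.outdeg qi = 2 := by
          rcases hclass qi hqiV with h | h | h | h
          · exact absurd (child_eq h.2.2 hqiA hsA) hsi
          · exact (no_out h.2.2 hqiA).elim
          · exact h.2.2
          · exact absurd (child_eq h.2.2 hqiA hsA) hsi
        by_cases hqq : qi = qj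
        · rcases child_mem_pair hqout2 (Ne.symm hsi) hqiA hsA (hqq.symm ▸ hqjA) with h | h
          · exact hij h.symm
          · rw [← h] at hsr
            have h5 := hsr.2.2
            have h6 := hj.2.2
            omega
        · have hqv' : qi ∈ N'.V := (hV'mem qi).mpr (Or.inr (Or.inr hqiV))
          have hnl' : ¬ N'.isLeaf qi := by
            intro h
            have h2 := (hdeg qi hqiV).2
            have h4 := h.2.2
            omega
          obtain ⟨c, hc, hcr⟩ := hTC' qi hqv' hnl'
          rcases (hmem (qi, c)).mp hc with ⟨hA, hne1, -⟩ | h | h | h | h | h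
          · rcases child_mem_pair hqout2 (Ne.symm hsi) hqiA hsA hA with h | h
            · exact hne1 (by rw [h])
            · rw [h] at hcr
              exact hcr ((hret_iff s hsV).mpr hsr)
          · simp only [Prod.mk.injEq] at h
            rw [h.2] at hcr
            exact hcr hpiiret
          · simp only [Prod.mk.injEq] at h
            exact hpii_qi h.1.symm
          · simp only [Prod.mk.injEq] at h
            exact hqq h.1
          · simp only [Prod.mk.injEq] at h
            exact hpjj_qi h.1.symm
          · simp only [Prod.mk.injEq] at h
            exact hpjj_qi h.1.symm
    · rintro ⟨hTC, hqir, hsib⟩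
      intro v hv' hnl'
      rcases (hV'mem v).mp hv' with hcv | hcv | hv
      · rw [hcv]
        refine ⟨i, (hmem (pii, i)).mpr (Or.inr (Or.inr (Or.inl rfl))), fun hr => ?_⟩
        have h1 := hr.2.2
        have h2 := (hdeg i hiV).2
        have h3 := hleafi.2.2
        omega
      · rw [hcv]
        refine ⟨j, (hmem (pjj, j)).mpr (Or.inr (Or.inr (Or.inr (Or.inr (Or.inl rfl))))),
          fun hr => ?_⟩
        have h1 := hr.2.2
        have h2 := (hdeg j hjV).2
        have h3 := hj.2.2
        omega
      · have hnl : ¬ N.isLeaf v := fun h => hnl' ((hleaf_iff v hv).mpr h)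
        obtain ⟨c, hc, hcr⟩ := hTC v hv hnl
        by_cases h1 : (v, c) = (qi, i)
        · simp only [Prod.mk.injEq] at h1
          rcases hclass v hv with hroot | hleafv | htree | hret
          · have hcout : N.outdeg c = 0 := by rw [h1.2]; exact hleafi.2.2
            exact (root_child_leaf_absurd N hP hroot hc hcout hjV
              (by omega) (by omega)).elim
          · exact absurd hleafv hnl
          · have hc2 : (N.A.filter (fun a => a.1 = v)).card = 2 := htree.2.2
            obtain ⟨⟨a2, b2⟩, hb2mem, hb2ne⟩ :=
              Finset.exists_mem_ne (s := N.A.filter (fun a => a.1 = v))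
                (by omega) ((v, c) : ℕ × ℕ)
            obtain ⟨hb2A, hb2v⟩ := Finset.mem_filter.mp hb2mem
            simp only at hb2v
            have hsA2 : (v, b2) ∈ N.A := by rw [← hb2v]; exact hb2A
            have hb2c : b2 ≠ c := by
              intro hh
              exact hb2ne (by rw [hb2v, hh])
            have hsnr : ¬ N.isRetic b2 :=
              hsib b2 (by rw [← h1.1]; exact hsA2) (by omega)
            by_cases h2 : ((v, b2) : ℕ × ℕ) = (qj, j)
            · simp only [Prod.mk.injEq] at h2
              refine ⟨pjj, (hmem (v, pjj)).mpr
                (Or.inr (Or.inr (Or.inr (Or.inl (by rw [h2.1]))))), fun hr => ?_⟩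
              have h5 := hr.2.2
              omega
            · refine ⟨b2, (hmem (v, b2)).mpr (Or.inl ⟨hsA2, ?_, h2⟩), fun hr => ?_⟩
              · simp only [ne_eq, Prod.mk.injEq]
                omega
              · exact hsnr ((hret_iff b2 (harcV _ hsA2).2).mp hr)
          · rw [h1.1] at hret
            exact absurd hret hqir
        · by_cases h2 : ((v, c) : ℕ × ℕ) = (qj, j)
          · simp only [Prod.mk.injEq] at h2
            refine ⟨pjj, (hmem (v, pjj)).mpr
              (Or.inr (Or.inr (Or.inr (Or.inl (by rw [h2.1]))))), fun hr => ?_⟩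
            have h5 := hr.2.2
            omega
          · refine ⟨c, (hmem (v, c)).mpr (Or.inl ⟨hc, h1, h2⟩), fun hr => ?_⟩
            exact hcr ((hret_iff c (harcV _ hc).2).mp hr)
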